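/- Let a < b be real numbers, N ≥ 1 an integer, and x : [a,b] → ℝ twice continuously differentiable. Let B_N x be the Bernstein approximant of x of degree N on [a,b]. Then for every τ ∈ [a,b], |B_N x(τ) − x(τ)| ≤ ((τ−a)(b−τ)/(2N))·sup_{s∈[a,b]}|x''(s)|. -/

import Mathlib

/-!
Taylor's theorem with Lagrange remainder gives
`|x s - x τ - x'(τ) (s - τ)| ≤ M / 2 * (s - τ) ^ 2` on `[a, b]`, where `M = sup |x''|`.
At `τ = a + p (b - a)` the Bernstein weights are the binomial distribution `Bin(N, p)` carried
to the nodes: their mean is `τ` and their variance is `(τ - a) (b - τ) / N`. Hence `B_N` reproduces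
the affine part of the expansion exactly, and the remainder averages to at most
`M / 2 * (τ - a) (b - τ) / N`.
-/

/-- Bernstein basis polynomial of degree `N`, index `j`, on `[a,b]`:
`b_{j,N}(t) = (N choose j) (t-a)^j (b-t)^(N-j) / (b-a)^N`. -/
noncomputable def bern (a b : ℝ) (N j : ℕ) (t : ℝ) : ℝ :=
  (N.choose j : ℝ) * (t - a) ^ j * (b - t) ^ (N - j) / (b - a) ^ N

/-- Bernstein approximant of degree `N` of `x` on `[a,b]`:
`B_N x(t) = Σ_{j=0}^N x(a + j(b−a)/N) b_{j,N}(t)`. -/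
noncomputable def bernApprox (x : ℝ → ℝ) (a b : ℝ) (N : ℕ) (t : ℝ) : ℝ :=
  ∑ j ∈ Finset.range (N + 1), x (a + (j : ℝ) * (b - a) / (N : ℝ)) * bern a b N j t

open Set Finset

theorem abs_sub_sub_derivWithin_mul_le {f : ℝ → ℝ} {a b M τ s : ℝ}
    (hf : ContDiffOn ℝ 2 f (Icc a b))
    (hM : ∀ y ∈ Icc a b, |iteratedDerivWithin 2 f (Icc a b) y| ≤ M)
    (hτ : τ ∈ Icc a b) (hs : s ∈ Icc a b) :
    |f s - f τ - derivWithin f (Icc a b) τ * (s - τ)| ≤ M / 2 * (s - τ) ^ 2 := by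
  rcases eq_or_ne τ s with rfl | hne
  · simp
  have hsub : uIcc τ s ⊆ Icc a b := uIcc_subset_Icc hτ hs
  obtain ⟨y, hy, hrem⟩ := taylor_mean_remainder_lagrange_iteratedDeriv (n := 1) hne (hf.mono hsub)
  have hyab : y ∈ Ioo a b :=
    ⟨(le_min hτ.1 hs.1).trans_lt hy.1, hy.2.trans_le (max_le hτ.2 hs.2)⟩
  have hderiv : derivWithin f (uIcc τ s) τ = derivWithin f (Icc a b) τ :=
    derivWithin_subset hsub (uniqueDiffOn_uIcc hne τ left_mem_uIcc)
      ((hf.differentiableOn two_ne_zero) τ hτ)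
  have hsecond : iteratedDeriv 2 f y = iteratedDerivWithin 2 f (Icc a b) y :=
    (iteratedDerivWithin_eq_iteratedDeriv (uniqueDiffOn_Icc (hyab.1.trans hyab.2))
      (hf.contDiffAt (Icc_mem_nhds hyab.1 hyab.2)) (Ioo_subset_Icc_self hyab)).symm
  have htaylor : f s - f τ - derivWithin f (Icc a b) τ * (s - τ)
      = iteratedDerivWithin 2 f (Icc a b) y / 2 * (s - τ) ^ 2 := by
    norm_num [Nat.factorial, iteratedDerivWithin_one, hderiv, hsecond] at hrem
    linear_combination hrem
  rw [htaylor, abs_mul, abs_div, abs_two, abs_of_nonneg (sq_nonneg (s - τ))]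
  gcongr
  exact hM y (Ioo_subset_Icc_self hyab)

namespace bernsteinPolynomial

variable {R : Type*} [CommRing R]

theorem sum_eval (n : ℕ) (p : R) :
    ∑ ν ∈ range (n + 1), (bernsteinPolynomial R n ν).eval p = 1 := by
  simpa [Polynomial.eval_finsetSum] using congrArg (Polynomial.eval p) (sum R n)

theorem sum_mul_eval (n : ℕ) (p : R) :
    ∑ ν ∈ range (n + 1), (ν : R) * (bernsteinPolynomial R n ν).eval p = n * p := by
  simpa [Polynomial.eval_finsetSum] using congrArg (Polynomial.eval p) (sum_smul R n)

theorem sum_sq_mul_eval (n : ℕ) (p : R) :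
    ∑ ν ∈ range (n + 1), (n * p - ν) ^ 2 * (bernsteinPolynomial R n ν).eval p
      = n * p * (1 - p) := by
  simpa [Polynomial.eval_finsetSum] using congrArg (Polynomial.eval p) (variance R n)

end bernsteinPolynomial

noncomputable def bernNode (a b : ℝ) (N j : ℕ) : ℝ := a + j * (b - a) / N

theorem bernApprox_eq_sum_bernNode (x : ℝ → ℝ) (a b : ℝ) (N : ℕ) (t : ℝ) :
    bernApprox x a b N t = ∑ j ∈ range (N + 1), x (bernNode a b N j) * bern a b N j t := rfl

theorem bernNode_mem_Icc {a b : ℝ} (hab : a ≤ b) {N j : ℕ} (hj : j ≤ N) :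
    bernNode a b N j ∈ Icc a b := by
  have h0 : 0 ≤ (j : ℝ) / N := by positivity
  have h1 : (j : ℝ) / N ≤ 1 := div_le_one_of_le₀ (by exact_mod_cast hj) N.cast_nonneg
  rw [bernNode, mul_div_right_comm]
  constructor <;> nlinarith [sub_nonneg.2 hab]

theorem bern_nonneg {a b t : ℝ} (ht : t ∈ Icc a b) (N j : ℕ) : 0 ≤ bern a b N j t := by
  have := sub_nonneg.2 ht.1
  have := sub_nonneg.2 ht.2
  have := sub_nonneg.2 (ht.1.trans ht.2)
  unfold bern
  positivity

section moments

variable {a b : ℝ} (hab : a ≠ b) (N : ℕ) (t : ℝ)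
include hab

theorem bern_eq_eval (j : ℕ) :
    bern a b N j t = (bernsteinPolynomial ℝ N j).eval ((t - a) / (b - a)) := by
  have hba : b - a ≠ 0 := sub_ne_zero.2 hab.symm
  rcases le_or_gt j N with hj | hj
  · have hpow : (b - a) ^ N = (b - a) ^ j * (b - a) ^ (N - j) := by
      rw [← pow_add, Nat.add_sub_cancel' hj]
    have hq : 1 - (t - a) / (b - a) = (b - t) / (b - a) := by field_simp; ring
    simp only [bern, bernsteinPolynomial, Polynomial.eval_mul, Polynomial.eval_pow,
      Polynomial.eval_sub, Polynomial.eval_one, Polynomial.eval_X, Polynomial.eval_natCast, hq,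
      div_pow, hpow]
    field_simp
  · simp [bern, bernsteinPolynomial, Nat.choose_eq_zero_of_lt hj]

theorem sum_bern : ∑ j ∈ range (N + 1), bern a b N j t = 1 := by
  simp only [bern_eq_eval hab, bernsteinPolynomial.sum_eval]

theorem bernNode_sub (hN : N ≠ 0) (j : ℕ) :
    bernNode a b N j - t = (b - a) / N * (j - N * ((t - a) / (b - a))) := by
  have hba : b - a ≠ 0 := sub_ne_zero.2 hab.symm
  rw [bernNode]
  field_simp
  ring

theorem sum_bernNode_sub_mul_bern (hN : N ≠ 0) :
    ∑ j ∈ range (N + 1), (bernNode a b N j - t) * bern a b N j t = 0 := by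
  simp only [bernNode_sub hab N t hN, bern_eq_eval hab, mul_assoc, ← mul_sum, sub_mul,
    sum_sub_distrib, bernsteinPolynomial.sum_mul_eval, bernsteinPolynomial.sum_eval]
  ring

theorem sum_bernNode_sub_sq_mul_bern (hN : N ≠ 0) :
    ∑ j ∈ range (N + 1), (bernNode a b N j - t) ^ 2 * bern a b N j t
      = (t - a) * (b - t) / N := by
  have hba : b - a ≠ 0 := sub_ne_zero.2 hab.symm
  have hsq : ∀ j : ℕ, (bernNode a b N j - t) ^ 2
      = ((b - a) / N) ^ 2 * (N * ((t - a) / (b - a)) - j) ^ 2 := fun j => by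
    rw [bernNode_sub hab N t hN]; ring
  simp only [hsq, bern_eq_eval hab, mul_assoc, ← mul_sum, bernsteinPolynomial.sum_sq_mul_eval]
  field_simp
  ring

end moments

theorem abs_bernApprox_sub_le {x : ℝ → ℝ} {a b c K τ : ℝ} {N : ℕ} (hab : a ≠ b) (hN : N ≠ 0)
    (hτ : τ ∈ Icc a b) (hx : ∀ s ∈ Icc a b, |x s - x τ - c * (s - τ)| ≤ K * (s - τ) ^ 2) :
    |bernApprox x a b N τ - x τ| ≤ K * ((τ - a) * (b - τ) / N) := by
  have hrepr : bernApprox x a b N τ - x τ = ∑ j ∈ range (N + 1),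
      (x (bernNode a b N j) - x τ - c * (bernNode a b N j - τ)) * bern a b N j τ := by
    have hsplit : ∀ j, (x (bernNode a b N j) - x τ - c * (bernNode a b N j - τ)) * bern a b N j τ
        = x (bernNode a b N j) * bern a b N j τ - x τ * bern a b N j τ
          - c * ((bernNode a b N j - τ) * bern a b N j τ) := fun j => by ring
    simp only [hsplit, sum_sub_distrib, ← mul_sum, sum_bern hab,
      sum_bernNode_sub_mul_bern hab N τ hN, bernApprox_eq_sum_bernNode]
    ring
  rw [hrepr, ← sum_bernNode_sub_sq_mul_bern hab N τ hN, mul_sum]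
  refine (abs_sum_le_sum_abs _ _).trans (sum_le_sum fun j hj => ?_)
  rw [abs_mul, abs_of_nonneg (bern_nonneg hτ N j), ← mul_assoc]
  gcongr
  · exact bern_nonneg hτ N j
  · exact hx _ (bernNode_mem_Icc (hτ.1.trans hτ.2) (Nat.lt_succ_iff.1 (mem_range.1 hj)))

/-- for `x ∈ C²([a,b])`,
`|B_N x(τ) − x(τ)| ≤ ((τ−a)(b−τ)/(2N)) sup_{s∈[a,b]} |x''(s)|`. -/
theorem bernApprox_pointwise_bound (a b : ℝ) (hab : a < b) (N : ℕ) (hN : 1 ≤ N)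
    (x : ℝ → ℝ) (hx : ContDiffOn ℝ 2 x (Set.Icc a b))
    (τ : ℝ) (hτ : τ ∈ Set.Icc a b) :
    |bernApprox x a b N τ - x τ|
      ≤ (τ - a) * (b - τ) / (2 * (N : ℝ)) *
          sSup ((fun s => |iteratedDerivWithin 2 x (Set.Icc a b) s|) '' Set.Icc a b) := by
  set M := sSup ((fun s => |iteratedDerivWithin 2 x (Set.Icc a b) s|) '' Set.Icc a b)
  have hM : ∀ s ∈ Set.Icc a b, |iteratedDerivWithin 2 x (Set.Icc a b) s| ≤ M := fun s hs =>
    (hx.continuousOn_iteratedDerivWithin le_rfl (uniqueDiffOn_Icc hab)).abs.le_sSup_image_Icc hs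
  calc |bernApprox x a b N τ - x τ| ≤ M / 2 * ((τ - a) * (b - τ) / N) :=
        abs_bernApprox_sub_le hab.ne (by omega) hτ fun s hs =>
          abs_sub_sub_derivWithin_mul_le hx hM hτ hs
    _ = (τ - a) * (b - τ) / (2 * (N : ℝ)) * M := by ring
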